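/- Let Λ : ℂ → Matrix n n ℂ be meromorphic on a connected open set U containing an interval (a,b) ⊂ (0,∞), with Λ(λ) Hermitian for all real λ ∈ (a,b) where Λ is defined. Then the set of λ ∈ (a,b) at which the matrix function λ ↦ √λ·I + i·Λ(λ) fails to be defined or fails to be invertible is discrete in (a,b), and (√λ·I + i·Λ(λ))⁻¹ is meromorphic near (a,b). -/

import Mathlib

/-!
For real `y > 0` the matrix `√y • 1 + I • H` with `H` Hermitian is invertible, since the spectrum
of `I • H` lies on the imaginary axis. Hence the determinant of `√z • 1 + I • Λ z`, a meromorphic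
function, does not vanish at the real points near `x ∈ (a,b)` where `Λ` is analytic, so by the
isolated-zeros dichotomy it vanishes nowhere on a punctured neighbourhood of `x`. The inverse is
meromorphic because it is the adjugate divided by the determinant.
-/

open Complex Set

/-- The branch of the square root, holomorphic off the negative real axis, positive on
`(0,∞)` (principal branch). -/
noncomputable def csqrt (z : ℂ) : ℂ := z ^ (1 / 2 : ℂ)

open Filter Topology

lemma csqrt_ofReal {x : ℝ} (hx : 0 ≤ x) : csqrt x = (√x : ℝ) := by
  rw [csqrt, Real.sqrt_eq_rpow, ofReal_cpow hx]
  norm_num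

lemma analyticAt_csqrt {z : ℂ} (hz : z ∈ slitPlane) : AnalyticAt ℂ csqrt z :=
  DifferentiableOn.analyticAt (s := slitPlane)
    (fun _ hw => (differentiableAt_id.cpow (differentiableAt_const _) hw).differentiableWithinAt)
    (isOpen_slitPlane.mem_nhds hz)

lemma Matrix.IsHermitian.isUnit_ofReal_smul_one_add_I_smul {ι : Type*} [Fintype ι]
    [DecidableEq ι] {H : Matrix ι ι ℂ} (hH : H.IsHermitian) {r : ℝ} (hr : r ≠ 0) :
    IsUnit ((r : ℂ) • (1 : Matrix ι ι ℂ) + I • H) := by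
  have hspec : I * r ∉ spectrum ℂ H := by
    rw [hH.spectrum_eq_image_range]
    rintro ⟨μ, -, hμ⟩
    exact hr (by simpa using (congrArg im hμ).symm)
  have hfactor : (r : ℂ) • (1 : Matrix ι ι ℂ) + I • H = (-I) • (algebraMap ℂ _ (I * r) - H) := by
    rw [Algebra.algebraMap_eq_smul_one, smul_sub, smul_smul, ← mul_assoc]
    simp [sub_eq_add_neg]
  rw [hfactor, Algebra.smul_def]
  exact ((isUnit_iff_ne_zero.mpr (neg_ne_zero.mpr I_ne_zero)).map _).mul
    (spectrum.notMem_iff.mp hspec)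

section Meromorphic

variable {𝕜 : Type*} [NontriviallyNormedField 𝕜] {ι : Type*} [Fintype ι] [DecidableEq ι]
  {A : 𝕜 → Matrix ι ι 𝕜} {x : 𝕜}

lemma meromorphicAt_matrix_det (hA : ∀ i j, MeromorphicAt (fun z => A z i j) x) :
    MeromorphicAt (fun z => (A z).det) x := by
  simp only [Matrix.det_apply']
  exact .fun_sum fun σ _ => (MeromorphicAt.const _ x).fun_mul (.fun_prod fun i _ => hA (σ i) i)

lemma meromorphicAt_matrix_adjugate_apply (hA : ∀ i j, MeromorphicAt (fun z => A z i j) x)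
    (i j : ι) :
    MeromorphicAt (fun z => (A z).adjugate i j) x := by
  simp only [Matrix.adjugate_apply]
  refine meromorphicAt_matrix_det fun k l => ?_
  by_cases hk : k = j
  · simp [hk]
  · simpa [hk] using hA k l

lemma meromorphicAt_matrix_inv_apply (hA : ∀ i j, MeromorphicAt (fun z => A z i j) x) (i j : ι) :
    MeromorphicAt (fun z => (A z)⁻¹ i j) x := by
  simp only [Matrix.inv_def, Matrix.smul_apply, smul_eq_mul, Ring.inverse_eq_inv]
  exact (meromorphicAt_matrix_det hA).inv.mul (meromorphicAt_matrix_adjugate_apply hA i j)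

end Meromorphic

lemma tendsto_ofReal_nhdsNE (x : ℝ) :
    Tendsto ((↑) : ℝ → ℂ) (𝓝[≠] x) (𝓝[≠] (x : ℂ)) :=
  continuous_ofReal.continuousWithinAt.tendsto_nhdsWithin fun _ _ => by simp_all

lemma MeromorphicAt.eventually_ne_zero_of_frequently_ofReal {f : ℂ → ℂ} {x : ℝ}
    (hf : MeromorphicAt f x) (h : ∃ᶠ y : ℝ in 𝓝[≠] x, f y ≠ 0) :
    ∀ᶠ z in 𝓝[≠] (x : ℂ), f z ≠ 0 :=
  hf.eventually_eq_zero_or_eventually_ne_zero.resolve_left fun h0 =>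
    let ⟨_, hne, heq⟩ := (h.and_eventually ((tendsto_ofReal_nhdsNE x).eventually h0)).exists
    hne heq

lemma isUnit_csqrt_smul_one_add_I_smul {ι : Type*} [Fintype ι] [DecidableEq ι]
    {H : Matrix ι ι ℂ} (hH : H.IsHermitian) {y : ℝ} (hy : 0 < y) :
    IsUnit (csqrt y • (1 : Matrix ι ι ℂ) + I • H) := by
  rw [csqrt_ofReal hy.le]
  exact hH.isUnit_ofReal_smul_one_add_I_smul (Real.sqrt_pos.mpr hy).ne'

theorem hermitian_meromorphic_inverse_discrete
    {n : ℕ} (U : Set ℂ)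
    (a b : ℝ) (ha : 0 < a)
    (hsub : (fun x : ℝ => (x : ℂ)) '' Ioo a b ⊆ U)
    (hslit : U ⊆ Complex.slitPlane)
    (Λ : ℂ → Matrix (Fin n) (Fin n) ℂ)
    (hmero : ∀ i j, MeromorphicOn (fun z => Λ z i j) U)
    (hherm : ∀ x ∈ Ioo a b, (∀ i j, AnalyticAt ℂ (fun z => Λ z i j) ((x : ℝ) : ℂ)) →
      (Λ ((x : ℝ) : ℂ)).IsHermitian) :
    (∀ x ∈ Ioo a b, ¬ AccPt x (Filter.principal {y ∈ Ioo a b |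
      ¬ ((∀ i j, AnalyticAt ℂ (fun z => Λ z i j) ((y : ℝ) : ℂ)) ∧
        IsUnit (csqrt ((y : ℝ) : ℂ) • (1 : Matrix (Fin n) (Fin n) ℂ)
          + Complex.I • Λ ((y : ℝ) : ℂ)))})) ∧
    ∀ i j, MeromorphicOn
      (fun z => (csqrt z • (1 : Matrix (Fin n) (Fin n) ℂ) + Complex.I • Λ z)⁻¹ i j) U := by
  set M : ℂ → Matrix (Fin n) (Fin n) ℂ := fun z => csqrt z • 1 + I • Λ z
  have hM : ∀ z ∈ U, ∀ i j, MeromorphicAt (fun w => M w i j) z := fun z hz i j => by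
    simp only [M, Matrix.add_apply, Matrix.smul_apply, smul_eq_mul]
    exact ((analyticAt_csqrt (hslit hz)).meromorphicAt.fun_mul (.const _ z)).fun_add
      ((MeromorphicAt.const I z).fun_mul (hmero i j z hz))
  refine ⟨fun x hx => ?_, fun i j z hz => meromorphicAt_matrix_inv_apply (hM z hz) i j⟩
  have hxU : (x : ℂ) ∈ U := hsub ⟨x, hx, rfl⟩
  have hΛ : ∀ᶠ z in 𝓝[≠] (x : ℂ), ∀ i j, AnalyticAt ℂ (fun w => Λ w i j) z := by
    simp only [eventually_all]
    exact fun i j => (hmero i j _ hxU).eventually_analyticAt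
  have hreal : ∀ᶠ y : ℝ in 𝓝[≠] x, (M y).det ≠ 0 := by
    filter_upwards [(tendsto_ofReal_nhdsNE x).eventually hΛ,
      nhdsWithin_le_nhds (Ioo_mem_nhds hx.1 hx.2)] with y hyΛ hy
    rw [← isUnit_iff_ne_zero, ← Matrix.isUnit_iff_isUnit_det]
    exact isUnit_csqrt_smul_one_add_I_smul (hherm y hy hyΛ) (ha.trans hy.1)
  have hdet := (meromorphicAt_matrix_det (hM x hxU)).eventually_ne_zero_of_frequently_ofReal
    hreal.frequently
  rw [accPt_iff_frequently_nhdsNE, not_frequently]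
  filter_upwards [(tendsto_ofReal_nhdsNE x).eventually (hΛ.and hdet)] with y ⟨hyΛ, hy⟩ hbad
  exact hbad.2 ⟨hyΛ, (Matrix.isUnit_iff_isUnit_det _).mpr hy.isUnit⟩
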